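/- arXiv:2502.08912 — 2 statements merged into one kernel-verified Lean document; each statement's English description precedes it below -/
import Mathlib

section
/- Let $c > 0$ and $R > 0$. There is no bounded $C^2$ function $u : (R, \infty) \to \mathbb{R}$ with $u > 0$ on $(R, \infty)$ satisfying the differential inequality $-u''(r) \geq c\, u(r)^3$ for all $r \in (R, \infty)$. -/
open Set

theorem stmt_3 (c R : ℝ) (hc : 0 < c) (hR : 0 < R) (u : ℝ → ℝ)
    (hu : ContDiffOn ℝ 2 u (Ioi R))
    (hpos : ∀ r ∈ Ioi R, 0 < u r)
    (hbdd : ∃ M : ℝ, ∀ r ∈ Ioi R, |u r| ≤ M)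
    (hineq : ∀ r ∈ Ioi R, -(deriv (deriv u) r) ≥ c * u r ^ 3) :
    False := by
  clear hbdd
  have hopen : IsOpen (Ioi R) := isOpen_Ioi
  have hud : DifferentiableOn ℝ u (Ioi R) := hu.differentiableOn (by norm_num)
  have hA : ∀ x ∈ Ioi R, HasDerivAt u (deriv u x) x := fun x hx =>
    ((hud x hx).differentiableAt (hopen.mem_nhds hx)).hasDerivAt
  have hcont : ContinuousOn u (Ioi R) := hu.continuousOn
  have hdu : ContDiffOn ℝ 1 (deriv u) (Ioi R) := by
    have := hu.deriv_of_isOpen (m := 1) hopen (by norm_num)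
    exact this
  have hdud : DifferentiableOn ℝ (deriv u) (Ioi R) := hdu.differentiableOn (by norm_num)
  have hB : ∀ x ∈ Ioi R, HasDerivAt (deriv u) (deriv (deriv u) x) x := fun x hx =>
    ((hdud x hx).differentiableAt (hopen.mem_nhds hx)).hasDerivAt
  have hcont' : ContinuousOn (deriv u) (Ioi R) := hdu.continuousOn
  -- second derivative strictly negative
  have hC : ∀ x ∈ Ioi R, deriv (deriv u) x < 0 := by
    intro x hx
    have h1 := hineq x hx
    have hux := hpos x hx
    have h2 : 0 < c * u x ^ 3 := by positivity
    linarith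
  -- deriv u strictly decreasing on Ioi R
  have hdec : ∀ a ∈ Ioi R, ∀ b ∈ Ioi R, a < b → deriv u b < deriv u a := by
    intro a ha b hb hab
    have hsub : Icc a b ⊆ Ioi R := fun x hx => lt_of_lt_of_le ha hx.1
    have hsub' : Ioo a b ⊆ Ioi R := fun x hx => lt_trans ha hx.1
    obtain ⟨ξ, hξ, hξeq⟩ := exists_hasDerivAt_eq_slope (deriv u) (deriv (deriv u)) hab
      (hcont'.mono hsub) (fun x hx => hB x (hsub' hx))
    have hneg : deriv (deriv u) ξ < 0 := hC ξ (hsub' hξ)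
    rw [hξeq] at hneg
    have : deriv u b - deriv u a < 0 := by
      have hba : 0 < b - a := by linarith
      have := mul_neg_of_neg_of_pos hneg hba
      rw [div_mul_cancel₀] at this; · linarith
      · linarith
    linarith
  -- slope bound: u b ≤ u a + deriv u a * (b - a) for a < b in Ioi R (using deriv u ξ < deriv u a)
  have hslope : ∀ a ∈ Ioi R, ∀ b ∈ Ioi R, a < b → u b ≤ u a + deriv u a * (b - a) := by
    intro a ha b hb hab
    have hsub : Icc a b ⊆ Ioi R := fun x hx => lt_of_lt_of_le ha hx.1
    have hsub' : Ioo a b ⊆ Ioi R := fun x hx => lt_trans ha hx.1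
    obtain ⟨ξ, hξ, hξeq⟩ := exists_hasDerivAt_eq_slope u (deriv u) hab
      (hcont.mono hsub) (fun x hx => hA x (hsub' hx))
    have : deriv u ξ < deriv u a := hdec a ha ξ (hsub' hξ) hξ.1
    rw [hξeq] at this
    have hba : 0 < b - a := by linarith
    rw [div_lt_iff₀ hba] at this
    linarith
  -- nonnegativity of deriv u
  have hd0 : ∀ a ∈ Ioi R, 0 ≤ deriv u a := by
    intro a ha
    by_contra h
    push_neg at h
    set b := a + (u a) / (-(deriv u a)) + 1 with hb
    have hab : a < b := by
      have : 0 < u a / (-(deriv u a)) := div_pos (hpos a ha) (by linarith)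
      simp only [hb]; linarith
    have hbR : b ∈ Ioi R := lt_trans ha hab
    have := hslope a ha b hbR hab
    have hub : 0 < u b := hpos b hbR
    have key : deriv u a * (b - a) < -(u a) := by
      have hba : b - a = u a / (-(deriv u a)) + 1 := by simp [hb]; ring
      rw [hba]
      have hne : deriv u a ≠ 0 := ne_of_lt h
      have h1 : deriv u a * (u a / (-(deriv u a))) = -(u a) := by
        field_simp
      nlinarith [hpos a ha]
    linarith
  -- monotone: u x ≥ u (R+1) for x > R+1
  have hR1 : (R + 1 : ℝ) ∈ Ioi R := by simp
  set m := u (R + 1) with hm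
  have hmpos : 0 < m := hpos _ hR1
  have hlow : ∀ x ∈ Ioi R, R + 1 < x → m ≤ u x := by
    intro x hx hx1
    obtain ⟨ξ, hξ, hξeq⟩ := exists_hasDerivAt_eq_slope u (deriv u) hx1
      (hcont.mono (fun y hy => lt_of_lt_of_le hR1 hy.1))
      (fun y hy => hA y (lt_trans hR1 hy.1))
    have h0 : 0 ≤ deriv u ξ := hd0 ξ (lt_trans hR1 hξ.1)
    rw [hξeq] at h0
    have hba : 0 < x - (R + 1) := by linarith
    have := (div_nonneg_iff.mp h0)
    rcases this with ⟨h1, _⟩ | ⟨_, h2⟩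
    · linarith
    · linarith
  -- second derivative ≤ -δ for x > R+1
  set δ := c * m ^ 3 with hδ
  have hδpos : 0 < δ := by positivity
  have hDD : ∀ x ∈ Ioi R, R + 1 < x → deriv (deriv u) x ≤ -δ := by
    intro x hx hx1
    have h1 := hineq x hx
    have h2 : m ≤ u x := hlow x hx hx1
    have h3 : m ^ 3 ≤ u x ^ 3 := pow_le_pow_left₀ hmpos.le h2 3
    have : δ ≤ c * u x ^ 3 := by
      apply mul_le_mul_of_nonneg_left h3 hc.le
    linarith
  -- final contradiction: deriv u at large b is negative
  have hd1 : 0 ≤ deriv u (R + 1) := hd0 _ hR1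
  set b := R + 1 + deriv u (R + 1) / δ + 1 with hbdef
  have hab : R + 1 < b := by
    have : 0 ≤ deriv u (R + 1) / δ := div_nonneg hd1 hδpos.le
    simp only [hbdef]; linarith
  have hbR : b ∈ Ioi R := by simp only [mem_Ioi]; linarith
  obtain ⟨ξ, hξ, hξeq⟩ := exists_hasDerivAt_eq_slope (deriv u) (deriv (deriv u)) hab
    (hcont'.mono (fun y hy => lt_of_lt_of_le hR1 hy.1))
    (fun y hy => hB y (lt_trans hR1 hy.1))
  have hle : deriv (deriv u) ξ ≤ -δ := hDD ξ (lt_trans hR1 hξ.1) hξ.1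
  rw [hξeq] at hle
  have hba : 0 < b - (R + 1) := by linarith
  rw [div_le_iff₀ hba] at hle
  have hkey : deriv u b ≤ deriv u (R + 1) - δ * (b - (R + 1)) := by linarith
  have hbb : b - (R + 1) = deriv u (R + 1) / δ + 1 := by simp [hbdef]; ring
  have h1 : δ * (deriv u (R + 1) / δ) = deriv u (R + 1) := by field_simp
  have hneg : deriv u b < 0 := by
    rw [hbb] at hkey
    nlinarith
  exact absurd (hd0 b hbR) (by linarith)
end

section
/- Let $\beta < -1$ and suppose $u : \mathbb{R}^N \to \mathbb{R}$ ($N \leq 3$) is a bounded $C^2$ function satisfying $-\Delta u = (1+\beta) u^3$ in $\mathbb{R}^N$. Then $u \equiv 0$. -/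
noncomputable section

open Filter Topology Set

/-- The Laplacian of `u : EuclideanSpace ℝ (Fin N) → ℝ` as the sum of pure second
derivatives. -/
def lapN (N : ℕ) (u : EuclideanSpace ℝ (Fin N) → ℝ) (x : EuclideanSpace ℝ (Fin N)) : ℝ :=
  ∑ i : Fin N,
    iteratedFDeriv ℝ 2 u x ![EuclideanSpace.single i 1, EuclideanSpace.single i 1]

/-- 1D second derivative test at a local max. -/
private lemma secondDerivTest (g g' : ℝ → ℝ) (c : ℝ)
    (hg' : ∀ t, HasDerivAt g (g' t) t)
    (hg'' : HasDerivAt g' c 0) (hmax : IsLocalMax g 0) : c ≤ 0 := by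
  by_contra h
  push_neg at h
  have h0 : g' 0 = 0 := hmax.hasDerivAt_eq_zero (hg' 0)
  have hslope : Tendsto (slope g' 0) (𝓝[≠] 0) (𝓝 c) :=
    hasDerivAt_iff_tendsto_slope.mp hg''
  have h1 : ∀ᶠ t in 𝓝[>] (0:ℝ), 0 < slope g' 0 t := by
    have h1' : ∀ᶠ t in 𝓝[≠] (0:ℝ), 0 < slope g' 0 t :=
      hslope.eventually_mem (Ioi_mem_nhds h)
    exact h1'.filter_mono (nhdsWithin_mono 0 (fun x hx => ne_of_gt hx))
  have h2 : ∀ᶠ t in 𝓝[>] (0:ℝ), g t ≤ g 0 := hmax.filter_mono nhdsWithin_le_nhds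
  have h3 := h1.and h2
  rw [eventually_iff, mem_nhdsGT_iff_exists_Ioc_subset] at h3
  obtain ⟨ε, hε, hsub⟩ := h3
  have hεpos : (0:ℝ) < ε := hε
  have hgpos : ∀ t ∈ Ioo (0:ℝ) ε, 0 < g' t := by
    intro t ht
    have hs := (hsub ⟨ht.1, le_of_lt ht.2⟩).1
    have hsl : slope g' 0 t = g' t / t := by
      simp [slope_def_field, h0]
    rw [hsl] at hs
    have := mul_pos hs ht.1
    rwa [div_mul_cancel₀ _ (ne_of_gt ht.1)] at this
  have hcont : Continuous g := by
    rw [continuous_iff_continuousAt]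
    exact fun t => (hg' t).differentiableAt.continuousAt
  have hmono : StrictMonoOn g (Icc 0 ε) := by
    apply strictMonoOn_of_deriv_pos (convex_Icc 0 ε) hcont.continuousOn
    intro t ht
    rw [interior_Icc] at ht
    rw [(hg' t).deriv]
    exact hgpos t ht
  have hlt : g 0 < g ε :=
    hmono (left_mem_Icc.2 (le_of_lt hεpos)) (right_mem_Icc.2 (le_of_lt hεpos)) hεpos
  exact absurd (hsub ⟨hεpos, le_refl ε⟩).2 (not_le.2 hlt)

private lemma line_deriv1 {E : Type*} [NormedAddCommGroup E] [NormedSpace ℝ E]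
    (u : E → ℝ) (hu : ContDiff ℝ 2 u) (x e : E) (t : ℝ) :
    HasDerivAt (fun s : ℝ => u (x + s • e)) (fderiv ℝ u (x + t • e) e) t := by
  have hL : HasDerivAt (fun s : ℝ => x + s • e) e t := by
    simpa using (((hasDerivAt_id t).smul_const e).const_add x)
  exact ((hu.differentiable two_ne_zero (x + t • e)).hasFDerivAt).comp_hasDerivAt t hL

private lemma line_deriv2 {E : Type*} [NormedAddCommGroup E] [NormedSpace ℝ E]
    (u : E → ℝ) (hu : ContDiff ℝ 2 u) (x e : E) :
    HasDerivAt (fun t : ℝ => fderiv ℝ u (x + t • e) e) (fderiv ℝ (fderiv ℝ u) x e e) 0 := by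
  have hL : HasDerivAt (fun s : ℝ => x + s • e) e (0:ℝ) := by
    simpa using (((hasDerivAt_id (0:ℝ)).smul_const e).const_add x)
  have hF : ContDiff ℝ 1 (fderiv ℝ u) := hu.fderiv_right (le_refl _)
  have h1 : HasDerivAt (fun t : ℝ => fderiv ℝ u (x + t • e)) (fderiv ℝ (fderiv ℝ u) x e) 0 := by
    have := ((hF.differentiable one_ne_zero (x + (0:ℝ) • e)).hasFDerivAt).comp_hasDerivAt 0 hL
    simpa [Function.comp_def] using this
  have h2 := ((ContinuousLinearMap.apply ℝ ℝ e).hasFDerivAt).comp_hasDerivAt 0 h1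
  exact h2

private lemma exists_max (N : ℕ) (u : EuclideanSpace ℝ (Fin N) → ℝ)
    (hu : Continuous u) (M : ℝ) (hM : ∀ x, |u x| ≤ M) (δ : ℝ) (hδ : 0 < δ) :
    ∃ x₀, ∀ x, u x - δ * ‖x‖ ^ 2 ≤ u x₀ - δ * ‖x₀‖ ^ 2 := by
  set f : EuclideanSpace ℝ (Fin N) → ℝ := fun x => u x - δ * ‖x‖ ^ 2 with hf
  have hfc : Continuous f := hu.sub (continuous_const.mul (continuous_norm.pow 2))
  set S : Set (EuclideanSpace ℝ (Fin N)) := {x | f 0 ≤ f x} with hS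
  have hSc : IsClosed S := isClosed_le continuous_const hfc
  have hSb : Bornology.IsBounded S := by
    rw [Metric.isBounded_iff_subset_closedBall 0]
    refine ⟨Real.sqrt (2 * M / δ), fun x hx => ?_⟩
    have hx' : f 0 ≤ f x := hx
    simp only [hf, norm_zero] at hx'
    have h2 : ‖x‖ ^ 2 ≤ 2 * M / δ := by
      rw [le_div_iff₀ hδ]
      have ha := abs_le.1 (hM x)
      have hb := abs_le.1 (hM 0)
      nlinarith [ha.1, ha.2, hb.1, hb.2]
    simp only [Metric.mem_closedBall, dist_zero_right]
    exact Real.le_sqrt_of_sq_le h2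
  have h0S : (0 : EuclideanSpace ℝ (Fin N)) ∈ S := by simp only [hS, mem_setOf_eq]; exact le_refl _
  obtain ⟨x₀, hx₀S, hx₀max⟩ :=
    (Metric.isCompact_of_isClosed_isBounded hSc hSb).exists_isMaxOn ⟨0, h0S⟩ hfc.continuousOn
  refine ⟨x₀, fun x => ?_⟩
  by_cases hx : f 0 ≤ f x
  · exact hx₀max hx
  · exact le_trans (le_of_lt (not_le.1 hx)) (hx₀max h0S)

private lemma key_nonpos (β : ℝ) (hβ : β < -1) (N : ℕ)
    (u : EuclideanSpace ℝ (Fin N) → ℝ) (hu : ContDiff ℝ 2 u)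
    (hbdd : ∃ M : ℝ, ∀ x, |u x| ≤ M)
    (heq : ∀ x, -lapN N u x = (1 + β) * u x ^ 3) :
    ∀ x, u x ≤ 0 := by
  obtain ⟨M, hM⟩ := hbdd
  set lam : ℝ := -(1 + β) with hlam
  have hlampos : 0 < lam := by simp [hlam]; linarith
  -- key estimate for every δ > 0
  have key : ∀ δ : ℝ, 0 < δ → ∃ x₀ : EuclideanSpace ℝ (Fin N),
      (lam * u x₀ ^ 3 ≤ 2 * N * δ) ∧ (∀ x, u x - δ * ‖x‖ ^ 2 ≤ u x₀) := by
    intro δ hδ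
    obtain ⟨x₀, hx₀⟩ := exists_max N u hu.continuous M hM δ hδ
    refine ⟨x₀, ?_, ?_⟩
    · -- each pure second derivative at x₀ is ≤ 2δ
      have hdir : ∀ i : Fin N,
          fderiv ℝ (fderiv ℝ u) x₀ (EuclideanSpace.single i 1) (EuclideanSpace.single i 1)
            ≤ 2 * δ := by
        intro i
        set e : EuclideanSpace ℝ (Fin N) := EuclideanSpace.single i 1 with he
        have hne : ‖e‖ = 1 := by simp [he, EuclideanSpace.norm_single]
        set c1 : ℝ := inner ℝ x₀ e with hc1
        set g : ℝ → ℝ := fun t => u (x₀ + t • e) - δ * (‖x₀‖ ^ 2 + 2 * t * c1 + t ^ 2) with hg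
        have hnorm : ∀ t : ℝ, ‖x₀ + t • e‖ ^ 2 = ‖x₀‖ ^ 2 + 2 * t * c1 + t ^ 2 := by
          intro t
          rw [norm_add_sq_real, real_inner_smul_right, norm_smul]
          simp [hne, mul_pow, sq_abs, hc1]
          ring
        have hmax : IsLocalMax g 0 := by
          apply Filter.Eventually.of_forall
          intro t
          have h1 : g t = u (x₀ + t • e) - δ * ‖x₀ + t • e‖ ^ 2 := by rw [hg]; rw [hnorm t]
          have h2 : g 0 = u x₀ - δ * ‖x₀‖ ^ 2 := by
            simp [hg]
          rw [h1, h2]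
          exact hx₀ _
        set g' : ℝ → ℝ := fun t => fderiv ℝ u (x₀ + t • e) e - δ * (2 * c1 + 2 * t) with hg'
        have hgd : ∀ t : ℝ, HasDerivAt g (g' t) t := by
          intro t
          apply HasDerivAt.sub (line_deriv1 u hu x₀ e t)
          have hp : HasDerivAt (fun t : ℝ => ‖x₀‖ ^ 2 + 2 * t * c1 + t ^ 2) (2 * c1 + 2 * t) t := by
            have ha : HasDerivAt (fun t : ℝ => 2 * t * c1) (2 * c1) t := by
              simpa using ((hasDerivAt_id t).const_mul 2).mul_const c1
            have hb : HasDerivAt (fun t : ℝ => t ^ 2) (2 * t) t := by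
              simpa using hasDerivAt_pow 2 t
            exact ((ha.const_add (‖x₀‖ ^ 2)).add hb)
          simpa using hp.const_mul δ
        have hgd2 : HasDerivAt g' (fderiv ℝ (fderiv ℝ u) x₀ e e - δ * 2) 0 := by
          apply HasDerivAt.sub (line_deriv2 u hu x₀ e)
          have hp : HasDerivAt (fun t : ℝ => 2 * c1 + 2 * t) 2 (0:ℝ) := by
            simpa using ((hasDerivAt_id (0:ℝ)).const_mul 2).const_add (2 * c1)
          simpa using hp.const_mul δ
        have := secondDerivTest g g' _ hgd hgd2 hmax
        linarith
      -- sum over directions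
      have hsum : lapN N u x₀ ≤ 2 * N * δ := by
        unfold lapN
        have hterm : ∀ i : Fin N,
            iteratedFDeriv ℝ 2 u x₀ ![EuclideanSpace.single i 1, EuclideanSpace.single i 1]
              ≤ 2 * δ := by
          intro i
          rw [iteratedFDeriv_two_apply]
          simpa using hdir i
        calc ∑ i : Fin N, iteratedFDeriv ℝ 2 u x₀
              ![EuclideanSpace.single i 1, EuclideanSpace.single i 1]
            ≤ ∑ _i : Fin N, 2 * δ := Finset.sum_le_sum fun i _ => hterm i
          _ = 2 * N * δ := by simp [Finset.sum_const]; ring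
      have heq' := heq x₀
      have : lam * u x₀ ^ 3 = lapN N u x₀ := by rw [hlam]; linarith [heq']
      linarith
    · intro x
      have := hx₀ x
      have hnn : 0 ≤ δ * ‖x₀‖ ^ 2 := by positivity
      linarith
  -- conclude
  intro x
  have hfin : ∀ ε : ℝ, 0 < ε → u x ≤ 2 * ε := by
    intro ε hε
    set δ : ℝ := min (ε / (‖x‖ ^ 2 + 1)) (lam * ε ^ 3 / (2 * N + 1)) with hδdef
    have hδpos : 0 < δ := by
      apply lt_min
      · positivity
      · positivity
    obtain ⟨x₀, h1, h2⟩ := key δ hδpos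
    have hd1 : δ ≤ ε / (‖x‖ ^ 2 + 1) := min_le_left _ _
    have hd2 : δ ≤ lam * ε ^ 3 / (2 * N + 1) := min_le_right _ _
    have hx2 : δ * ‖x‖ ^ 2 ≤ ε := by
      have hpos : (0:ℝ) < ‖x‖ ^ 2 + 1 := by positivity
      have := mul_le_mul_of_nonneg_right hd1 (sq_nonneg ‖x‖)
      calc δ * ‖x‖ ^ 2 ≤ ε / (‖x‖ ^ 2 + 1) * ‖x‖ ^ 2 := this
        _ ≤ ε := by
          rw [div_mul_eq_mul_div, div_le_iff₀ hpos]
          nlinarith [sq_nonneg ‖x‖]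
    have hx3 : u x₀ ≤ ε := by
      have hcube : lam * u x₀ ^ 3 ≤ lam * ε ^ 3 := by
        have hNnn : (0:ℝ) ≤ (N:ℝ) := Nat.cast_nonneg N
        have h2N : 2 * (N:ℝ) * δ ≤ lam * ε ^ 3 := by
          have hpos : (0:ℝ) < 2 * N + 1 := by positivity
          have := mul_le_mul_of_nonneg_left hd2 (by linarith : (0:ℝ) ≤ 2 * N)
          calc 2 * (N:ℝ) * δ ≤ 2 * N * (lam * ε ^ 3 / (2 * N + 1)) := by linarith [this]
            _ ≤ lam * ε ^ 3 := by
              rw [mul_div_assoc']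
              rw [div_le_iff₀ hpos]
              nlinarith [mul_pos hlampos (pow_pos hε 3)]
        linarith
      have hcube' : u x₀ ^ 3 ≤ ε ^ 3 := le_of_mul_le_mul_left (by linarith) hlampos
      by_contra hcon
      push_neg at hcon
      have : ε ^ 3 < u x₀ ^ 3 := by
        apply pow_lt_pow_left₀ hcon (le_of_lt hε)
        norm_num
      linarith
    have := h2 x
    linarith
  by_contra hcon
  push_neg at hcon
  have := hfin (u x / 4) (by linarith)
  linarith

theorem stmt_6 (β : ℝ) (hβ : β < -1) (N : ℕ) (hN : N ≤ 3)
    (u : EuclideanSpace ℝ (Fin N) → ℝ)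
    (hu : ContDiff ℝ 2 u)
    (hbdd : ∃ M : ℝ, ∀ x, |u x| ≤ M)
    (heq : ∀ x, -lapN N u x = (1 + β) * u x ^ 3) :
    u = 0 := by
  obtain ⟨M, hM⟩ := hbdd
  have hle := key_nonpos β hβ N u hu ⟨M, hM⟩ heq
  have hlapneg : ∀ x, lapN N (fun y => -u y) x = -lapN N u x := by
    intro x
    unfold lapN
    rw [← Finset.sum_neg_distrib]
    apply Finset.sum_congr rfl
    intro i _
    have : (fun y => -u y) = -u := rfl
    rw [this, iteratedFDeriv_neg_apply]
    rfl
  have hge := key_nonpos β hβ N (fun y => -u y) hu.neg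
    ⟨M, fun x => by simpa using hM x⟩
    (fun x => by
      rw [hlapneg x]
      have := heq x
      ring_nf
      ring_nf at this
      linarith)
  funext x
  have h1 := hle x
  have h2 := hge x
  simp only [Pi.zero_apply]
  simp at h2
  linarith
end
end
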